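/- (Theorem 4.14, module exclusion via edge control.) Let F = (f₁, …, f_n) be a Boolean network on variable set V, let I ⊆ V (the variables of the excludable module), let x* ∈ V ∖ I, and let P ⊆ V ∖ I (the phenotype variables). Assume: (i) every directed path in the wiring diagram of F from a vertex of I to a vertex of P passes through x*; and (ii) f_{x*} ≢ 0 has stratified representation f_{x*} = M₁(M₂(⋯) + 1) + q, and some variable y* of f_{x*} belonging to I appears in the most dominant layer M₁ with factor (y* + a). Let F^μ be the controlled network obtained from F by the edge control on y* → x*, i.e., replacing f_{x*} by its restriction with the input y* set to a (all other coordinate functions unchanged); this restriction is the constant q. Then for any two initial states z, z' ∈ 𝔽₂^V that agree on all variables of V ∖ I, the trajectories of F^μ from z and z' agree on every variable of P at all times t ≥ 0. In particular, the phenotype determined by P in F^μ is independent of the module I, so I can be excluded from the control search. -/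

import Mathlib

/-!
Setting `y*` to `a y*` on the edge `y* → x*` annihilates the dominant layer `M₁ ∋ (y* + a)`
of `f_{x*}`, so in the controlled network `x*` is updated to the constant `q`. Call `v`
separated if every path from `I` to `v` passes through `x*`. Separated vertices lie outside
`I`, every input of a separated vertex `v ≠ x*` is separated, and `x*` has no inputs left;
since a Boolean function on finitely many variables is determined by its essential ones,
induction on `t` shows that trajectories from states agreeing outside `I` agree on all
separated vertices, among them `P`.
-/

/-- A Boolean function `f` is essential in (depends on) the variable `v` if flipping
the value of `v` can change the value of `f`. -/
def EssentialIn {V : Type*} [DecidableEq V] (f : (V → ZMod 2) → ZMod 2) (v : V) : Prop :=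
  ∃ x, f x ≠ f (Function.update x v (x v + 1))

/-- A Boolean function is canalizing if some variable `v` has an input value `a` that
forces the output value `b`. -/
def IsCanalizing {V : Type*} (f : (V → ZMod 2) → ZMod 2) : Prop :=
  ∃ (v : V) (a b : ZMod 2), ∀ x, x v = a → f x = b

/-- The extended monomial on the variable set `S` with constants `a`,
`M(x) = ∏_{j ∈ S} (x_j + a_j)`. -/
def extMonomial {V : Type*} (S : Finset V) (a : V → ZMod 2) (x : V → ZMod 2) : ZMod 2 :=
  ∏ j ∈ S, (x j + a j)

/-- The nested form `M₁(M₂(⋯(M_{r-1}(M_r·p + 1) + 1)⋯) + 1)` determined by a list of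
layers (variable sets) `L`, constants `a`, and a core polynomial `p`. For `L = []` it
is just `p`. -/
def nestedLayers {V : Type*} (a : V → ZMod 2) (p : (V → ZMod 2) → ZMod 2) :
    List (Finset V) → (V → ZMod 2) → ZMod 2
  | [], x => p x
  | [S], x => extMonomial S a x * p x
  | S :: T :: Ss, x => extMonomial S a x * (nestedLayers a p (T :: Ss) x + 1)

/-- `IsStratification f L a p q` says that
`f = M₁(M₂(⋯(M_{r-1}(M_r·p_C + 1) + 1)⋯) + 1) + q` is a representation of `f` as in
the He–Macauley stratification theorem: the layers `Mᵢ = ∏_{j ∈ Sᵢ} (x_j + a_j)` are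
nonconstant extended monomials in pairwise disjoint variable sets, the core polynomial
`p` is independent of all layer variables and is identically `1` or non-canalizing,
and the exceptional-case conditions hold (if `p ≡ 1` and `r ≠ 1` then `k_r ≥ 2`; if
`p ≡ 1`, `r = 1`, `k₁ = 1` then `q = 0`; and for `r = 0` the representation is
`f = p_C`, i.e. `q = 0`). -/
def IsStratification {V : Type*} [DecidableEq V] (f : (V → ZMod 2) → ZMod 2)
    (L : List (Finset V)) (a : V → ZMod 2) (p : (V → ZMod 2) → ZMod 2) (q : ZMod 2) :
    Prop :=
  (∀ S ∈ L, S.Nonempty) ∧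
  L.Pairwise Disjoint ∧
  (∀ S ∈ L, ∀ v ∈ S, ¬ EssentialIn p v) ∧
  (p = (fun _ => 1) ∨ ¬ IsCanalizing p) ∧
  (p = (fun _ => 1) → L.length ≠ 1 → ∀ S ∈ L.getLast?, 2 ≤ S.card) ∧
  (p = (fun _ => 1) → ∀ S, L = [S] → S.card = 1 → q = 0) ∧
  (L = [] → q = 0) ∧
  f = fun x => nestedLayers a p L x + q

section Essential

variable {V : Type*} [DecidableEq V] {f : (V → ZMod 2) → ZMod 2}

lemma apply_update_of_not_essentialIn {v : V} (hv : ¬ EssentialIn f v) (x : V → ZMod 2)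
    (c : ZMod 2) : f (Function.update x v c) = f x := by
  obtain rfl | rfl : c = x v ∨ c = x v + 1 := by generalize x v = b; revert b c; decide
  · rw [Function.update_eq_self]
  · by_contra hne
    exact hv ⟨x, Ne.symm hne⟩

lemma apply_eq_of_eq_on_essentialIn [Fintype V] {s s' : V → ZMod 2}
    (h : ∀ v, EssentialIn f v → s v = s' v) : f s = f s' := by
  suffices key : ∀ D : Finset V, (∀ v ∈ D, ¬ EssentialIn f v) →
      ∀ s, (∀ v ∉ D, s v = s' v) → f s = f s' from
    key {v | s v ≠ s' v} (fun v hv hess => (Finset.mem_filter.mp hv).2 (h v hess)) s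
      fun v hv => by simpa using hv
  intro D
  induction D using Finset.induction_on with
  | empty => exact fun _ s hs => congrArg f (funext fun v => hs v (Finset.notMem_empty v))
  | insert v D _ ih =>
    intro hD s hs
    rw [← apply_update_of_not_essentialIn (hD v (Finset.mem_insert_self v D)) s (s' v)]
    refine ih (fun u hu => hD u (Finset.mem_insert_of_mem hu)) _ fun u hu => ?_
    by_cases huv : u = v
    · rw [huv, Function.update_self]
    · rw [Function.update_of_ne huv]
      exact hs u (by simp [huv, hu])

lemma eqOn_iterate_of_essentialIn_mem [Fintype V] {G : (V → ZMod 2) → V → ZMod 2} {S : Set V}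
    (hS : ∀ v ∈ S, ∀ u, EssentialIn (fun x => G x v) u → u ∈ S) {z z' : V → ZMod 2}
    (hz : Set.EqOn z z' S) (t : ℕ) : Set.EqOn (G^[t] z) (G^[t] z') S := by
  induction t with
  | zero => exact hz
  | succ t ih =>
    intro v hv
    simp only [Function.iterate_succ_apply']
    exact apply_eq_of_eq_on_essentialIn fun u hu => ih (hS v hv u hu)

end Essential

section Stratification

variable {V : Type*} {a : V → ZMod 2} {x : V → ZMod 2}

lemma extMonomial_eq_zero {S : Finset V} {y : V} (hy : y ∈ S) (hxy : x y = a y) :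
    extMonomial S a x = 0 :=
  Finset.prod_eq_zero hy (by rw [hxy, CharTwo.add_self_eq_zero])

lemma nestedLayers_cons_eq_zero {p : (V → ZMod 2) → ZMod 2} {S : Finset V}
    {Ls : List (Finset V)} (hS : extMonomial S a x = 0) : nestedLayers a p (S :: Ls) x = 0 := by
  cases Ls <;> simp [nestedLayers, hS]

lemma IsStratification.update_eq_const_of_mem_head [DecidableEq V]
    {f : (V → ZMod 2) → ZMod 2} {L : List (Finset V)} {p : (V → ZMod 2) → ZMod 2} {q : ZMod 2}
    (h : IsStratification f L a p q) (h0 : 0 < L.length) {y : V} (hy : y ∈ L.get ⟨0, h0⟩)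
    (z : V → ZMod 2) : f (Function.update z y (a y)) = q := by
  obtain ⟨S, Ls, rfl⟩ := List.exists_cons_of_length_pos h0
  obtain ⟨-, -, -, -, -, -, -, hf⟩ := h
  rw [hf]
  dsimp only
  rw [nestedLayers_cons_eq_zero (extMonomial_eq_zero (S := S) hy (Function.update_self ..)),
    zero_add]

end Stratification

section Paths

variable {V : Type*} (E : V → V → Prop) (x : V) (I : Set V)

def Separates (v : V) : Prop :=
  ∀ (l : List V) (hne : l ≠ []), l.IsChain E → l.head hne ∈ I → l.getLast hne = v → x ∈ l

variable {E x I}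

lemma Separates.notMem (hx : x ∉ I) {v : V} (h : Separates E x I v) : v ∉ I := by
  intro hv
  have := h [v] (List.cons_ne_nil v []) (List.isChain_singleton v) hv rfl
  rw [List.mem_singleton.mp this] at hx
  exact hx hv

lemma Separates.of_rel {u v : V} (h : Separates E x I v) (hvx : v ≠ x) (huv : E u v) :
    Separates E x I u := by
  intro l hne hl hhead hlast
  have hne' : l ++ [v] ≠ [] := List.append_ne_nil_of_right_ne_nil l (List.cons_ne_nil v [])
  have hl' : (l ++ [v]).IsChain E := hl.append (List.isChain_singleton v) fun w hw v' hv' => by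
    rw [List.getLast?_eq_some_getLast hne, Option.mem_some_iff] at hw
    rw [List.head?_cons, Option.mem_some_iff] at hv'
    rwa [← hw, ← hv', hlast]
  have := h (l ++ [v]) hne' hl' (by rwa [List.head_append_of_ne_nil hne])
    (List.getLast_append_singleton l)
  simpa [Ne.symm hvx] using this

end Paths

theorem stmt_17_general (V : Type*) [DecidableEq V] [Fintype V]
    (F : (V → ZMod 2) → (V → ZMod 2))
    (I P : Set V) (xstar ystar : V)
    (hx : xstar ∉ I)
    -- the wiring diagram: `E u v` iff the update function of `v` depends on `u`
    (E : V → V → Prop)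
    (hE : ∀ u v, E u v ↔ ∃ x, F x v ≠ F (Function.update x u (x u + 1)) v)
    -- (i) every path from `I` to `P` passes through `xstar`
    (hpathP : ∀ (l : List V) (hne : l ≠ []), l.Chain' E →
      l.head hne ∈ I → l.getLast hne ∈ P → xstar ∈ l)
    -- (ii) `ystar` lies in the most dominant layer of the update function of `xstar`
    (L : List (Finset V)) (a : V → ZMod 2)
    (p : (V → ZMod 2) → ZMod 2) (q : ZMod 2)
    (h : IsStratification (fun x => F x xstar) L a p q)
    (h0 : 0 < L.length) (hyj : ystar ∈ L.get ⟨0, h0⟩)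
    -- the controlled network: the edge control on `ystar → xstar` with constant `a`
    (Fμ : (V → ZMod 2) → (V → ZMod 2))
    (hFμ : ∀ z v, Fμ z v =
      if v = xstar then F (Function.update z ystar (a ystar)) xstar else F z v) :
    -- the restricted update function of `xstar` is the constant `q`
    ((fun z => F (Function.update z ystar (a ystar)) xstar) = fun _ => q) ∧
    -- and the phenotype is independent of the module `I`
    ∀ z z' : V → ZMod 2,
      (∀ v, v ∉ I → z v = z' v) →
      ∀ t : ℕ, ∀ v ∈ P, (Fμ^[t] z) v = (Fμ^[t] z') v := by
  have hconst : ∀ z, Fμ z xstar = q := fun z => by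
    rw [hFμ, if_pos rfl, h.update_eq_const_of_mem_head h0 hyj]
  refine ⟨funext (h.update_eq_const_of_mem_head h0 hyj), fun z z' hzz' t v hv => ?_⟩
  have hclosed : ∀ w ∈ {w | Separates E xstar I w}, ∀ u, EssentialIn (fun x => Fμ x w) u →
      u ∈ {w | Separates E xstar I w} := by
    intro w hw u ⟨y, hy⟩
    by_cases hwx : w = xstar
    · subst hwx
      exact absurd ((hconst _).trans (hconst _).symm) hy
    · simp only [hFμ, if_neg hwx] at hy
      exact hw.of_rel hwx ((hE u w).2 ⟨y, hy⟩)
  refine eqOn_iterate_of_essentialIn_mem hclosed (fun w hw => hzz' w (hw.notMem hx)) t ?_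
  exact fun l hne hl hhead hlast => hpathP l hne hl hhead (hlast ▸ hv)

/-- **Theorem 4.14, module exclusion via edge control.** Let `F` be a
Boolean network on the variable set `V`, `I ⊆ V` the variables of the excludable
module, `xstar ∉ I`, and `P ⊆ V ∖ I` the phenotype variables. Assume: (i) every
directed path in the wiring diagram from `I` to `P` passes through `xstar`; (ii) the
update function of `xstar` has a stratified representation with layers `L` and a
variable `ystar ∈ I` appears in the most dominant layer `M₁` (with factor
`(ystar + a)`). Apply the edge control on `ystar → xstar`, replacing the update
function of `xstar` by its restriction with the input `ystar` set to `a`. Then this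
restriction is the constant `q`, and any two initial states agreeing outside `I` have
trajectories (under the controlled network) agreeing on every phenotype variable at
all times; so `I` can be excluded from the control search. -/
theorem stmt_17 (V : Type*) [DecidableEq V] [Fintype V]
    (F : (V → ZMod 2) → (V → ZMod 2))
    (I P : Set V) (xstar ystar : V)
    (hx : xstar ∉ I) (hPI : ∀ v ∈ P, v ∉ I) (hyI : ystar ∈ I)
    -- the wiring diagram: `E u v` iff the update function of `v` depends on `u`
    (E : V → V → Prop)
    (hE : ∀ u v, E u v ↔ ∃ x, F x v ≠ F (Function.update x u (x u + 1)) v)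
    -- (i) every path from `I` to `P` passes through `xstar`
    (hpathP : ∀ (l : List V) (hne : l ≠ []), l.Chain' E →
      l.head hne ∈ I → l.getLast hne ∈ P → xstar ∈ l)
    -- (ii) `ystar` lies in the most dominant layer of the update function of `xstar`
    (L : List (Finset V)) (a : V → ZMod 2)
    (p : (V → ZMod 2) → ZMod 2) (q : ZMod 2)
    (hf0 : (fun x => F x xstar) ≠ fun _ => 0)
    (h : IsStratification (fun x => F x xstar) L a p q)
    (h0 : 0 < L.length) (hyj : ystar ∈ L.get ⟨0, h0⟩)
    -- the controlled network: the edge control on `ystar → xstar` with constant `a`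
    (Fμ : (V → ZMod 2) → (V → ZMod 2))
    (hFμ : ∀ z v, Fμ z v =
      if v = xstar then F (Function.update z ystar (a ystar)) xstar else F z v) :
    -- the restricted update function of `xstar` is the constant `q`
    ((fun z => F (Function.update z ystar (a ystar)) xstar) = fun _ => q) ∧
    -- and the phenotype is independent of the module `I`
    ∀ z z' : V → ZMod 2,
      (∀ v, v ∉ I → z v = z' v) →
      ∀ t : ℕ, ∀ v ∈ P, (Fμ^[t] z) v = (Fμ^[t] z') v :=
  stmt_17_general V F I P xstar ystar hx E hE hpathP L a p q h h0 hyj Fμ hFμ
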